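/- Let A_m ⊆ Ω_{n_m} be a sequence of monotone events with inf_m II(A_m) > 0. Then {A_m} is not asymptotically noise sensitive: there exists ε ∈ (0,1/2) such that φ(A_m, ε) does not tend to 0 as m → ∞. -/
import Mathlib


namespace BKS

open Finset Filter

variable {ι : Type} [Fintype ι] [DecidableEq ι]

/-- Probability of an event under the uniform measure on `ι → Bool`. -/
noncomputable def cprob (A : Finset (ι → Bool)) : ℝ :=
  (A.card : ℝ) / 2 ^ Fintype.card ι

/-- Expectation of a function under the uniform measure on `ι → Bool`. -/
noncomputable def cexpect (f : (ι → Bool) → ℝ) : ℝ :=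
  (∑ x : ι → Bool, f x) / 2 ^ Fintype.card ι

/-- Real-valued indicator of an event. -/
noncomputable def indE (A : Finset (ι → Bool)) : (ι → Bool) → ℝ :=
  fun x => if x ∈ A then 1 else 0

/-- Transition kernel of the ε-noise: probability that `N_ε(x) = y`. -/
noncomputable def noiseKernel (ε : ℝ) (x y : ι → Bool) : ℝ :=
  ∏ j : ι, if y j = x j then 1 - ε else ε

/-- `P(N_ε(x) ∈ A | x)`. -/
noncomputable def condProb (ε : ℝ) (A : Finset (ι → Bool)) (x : ι → Bool) : ℝ :=
  ∑ y ∈ A, noiseKernel ε x y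

/-- Sensitivity gauge φ(A, ε) = inf{δ > 0 : P{x : |P(N_ε(x) ∈ A | x) − P(A)| > δ} < δ}. -/
noncomputable def gauge (ε : ℝ) (A : Finset (ι → Bool)) : ℝ :=
  sInf {δ : ℝ | 0 < δ ∧
    cprob (@Finset.filter _ (fun x => δ < |condProb ε A x - cprob A|)
      (Classical.decPred _) Finset.univ) < δ}

/-- Flip the `k`-th bit. -/
def flipBit (k : ι) (x : ι → Bool) : ι → Bool := Function.update x k (!x k)

/-- Influence of the `k`-th variable: `I_k(f) = E|f(σ_k x) − f(x)|`. -/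
noncomputable def influence (k : ι) (f : (ι → Bool) → ℝ) : ℝ :=
  cexpect fun x => |f (flipBit k x) - f x|

/-- `I(f) = Σ_k I_k(f)`. -/
noncomputable def totalInf (f : (ι → Bool) → ℝ) : ℝ := ∑ k : ι, influence k f

/-- `II(f) = Σ_k I_k(f)²`. -/
noncomputable def sqInf (f : (ι → Bool) → ℝ) : ℝ := ∑ k : ι, (influence k f) ^ 2

/-- `II(A)` for an event `A`. -/
noncomputable def sqInfE (A : Finset (ι → Bool)) : ℝ := sqInf (indE A)

/-- A monotone (upward closed) event. -/
def MonotoneEvent (A : Finset (ι → Bool)) : Prop :=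
  ∀ x y : ι → Bool, (∀ j, x j ≤ y j) → x ∈ A → y ∈ A

/-- Fourier–Walsh coefficient `f̂(S) = E[f · u_S]`, where `u_S(x) = (−1)^{|S ∩ x|}`. -/
noncomputable def walshFourier (f : (ι → Bool) → ℝ) (S : Finset ι) : ℝ :=
  cexpect fun x => f x * (-1 : ℝ) ^ (S.filter fun j => x j = true).card

/-- `Q_ε f (x) = E[f(N_ε(x))]`. -/
noncomputable def Qop (ε : ℝ) (f : (ι → Bool) → ℝ) (x : ι → Bool) : ℝ :=
  ∑ y : ι → Bool, noiseKernel ε x y * f y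

/-- `VAR(f, ε)`: variance of `x ↦ E[f(N_ε(x)) | x]`. -/
noncomputable def VAR (ε : ℝ) (f : (ι → Bool) → ℝ) : ℝ :=
  cexpect fun x => (Qop ε f x - cexpect (Qop ε f)) ^ 2

/-- `P[A △ N_ε A]`. -/
noncomputable def probSymmDiff (ε : ℝ) (A : Finset (ι → Bool)) : ℝ :=
  cexpect fun x => ∑ y : ι → Bool, noiseKernel ε x y *
    (if (x ∈ A) ↔ (y ∈ A) then 0 else 1)

/-- `P[A \ N_ε A]`. -/
noncomputable def probOffDiff (ε : ℝ) (A : Finset (ι → Bool)) : ℝ :=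
  cexpect fun x => ∑ y : ι → Bool, noiseKernel ε x y *
    (if x ∈ A ∧ y ∉ A then 1 else 0)

/-- Majority function on the set `K`: `M_K(x) = sign(Σ_{j∈K}(2x_j − 1))`. -/
noncomputable def majority (K : Finset ι) (x : ι → Bool) : ℝ :=
  Real.sign (∑ j ∈ K, (2 * (if x j then (1:ℝ) else 0) - 1))

/-- Weighted majority function `M_w(x) = sign(Σ_j (2x_j − 1) w_j)`. -/
noncomputable def wMajority (w : ι → ℝ) (x : ι → Bool) : ℝ :=
  Real.sign (∑ j : ι, (2 * (if x j then (1:ℝ) else 0) - 1) * w j)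

/-- The discrete cube Ω_n = {0,1}^n. -/
abbrev Cube (n : ℕ) := Fin n → Bool

set_option linter.unusedSectionVars false

noncomputable def chi (k : ι) (x : ι → Bool) : ℝ := if x k then 1 else -1

lemma chi_sq (k : ι) (x : ι → Bool) : chi k x * chi k x = 1 := by
  unfold chi; cases x k <;> norm_num

lemma flipBit_involutive (k : ι) : Function.Involutive (flipBit k) := by
  intro x; funext j
  by_cases hj : j = k
  · subst hj; simp [flipBit]
  · simp [flipBit, Function.update_of_ne hj]

lemma flipBit_self (k : ι) (x : ι → Bool) : flipBit k x k = !x k :=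
  Function.update_self _ _ _

lemma flipBit_other {k j : ι} (h : j ≠ k) (x : ι → Bool) : flipBit k x j = x j :=
  Function.update_of_ne h _ _

lemma sum_flip (k : ι) (g : (ι → Bool) → ℝ) :
    ∑ x : ι → Bool, g (flipBit k x) = ∑ x : ι → Bool, g x :=
  Fintype.sum_bijective (flipBit k) (flipBit_involutive k).bijective _ _ (fun _ => rfl)

lemma chi_flip (k : ι) (x : ι → Bool) : chi k (flipBit k x) = - chi k x := by
  unfold chi; rw [flipBit_self]; cases x k <;> norm_num

lemma sum_chi (k : ι) : ∑ x : ι → Bool, chi k x = 0 := by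
  have h := sum_flip k (chi k)
  have h2 : ∑ x : ι → Bool, chi k (flipBit k x) = - ∑ x : ι → Bool, chi k x := by
    rw [← Finset.sum_neg_distrib]
    exact Finset.sum_congr rfl fun x _ => chi_flip k x
  linarith [h, h2]

lemma chi_orth (k l : ι) :
    ∑ x : ι → Bool, chi k x * chi l x =
      if k = l then (2 ^ Fintype.card ι : ℝ) else 0 := by
  by_cases hkl : k = l
  · subst hkl
    rw [if_pos rfl, Finset.sum_congr rfl fun x _ => chi_sq k x]
    simp [Finset.card_univ, Fintype.card_fun]
  · rw [if_neg hkl]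
    have h := sum_flip k (fun x => chi k x * chi l x)
    have h2 : ∑ x : ι → Bool, chi k (flipBit k x) * chi l (flipBit k x)
        = - ∑ x : ι → Bool, chi k x * chi l x := by
      rw [← Finset.sum_neg_distrib]
      refine Finset.sum_congr rfl fun x _ => ?_
      rw [chi_flip]
      unfold chi
      rw [flipBit_other (Ne.symm hkl)]
      ring
    linarith [h, h2]

lemma sum_pi_prod (g : ι → Bool → ℝ) :
    ∑ x : ι → Bool, ∏ j : ι, g j (x j) = ∏ j : ι, ∑ b : Bool, g j b := by
  rw [Finset.prod_univ_sum, Fintype.piFinset_univ]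

lemma noiseKernel_nonneg {ε : ℝ} (hε0 : 0 ≤ ε) (hε1 : ε ≤ 1) (x y : ι → Bool) :
    0 ≤ noiseKernel ε x y := by
  refine Finset.prod_nonneg fun j _ => ?_
  split <;> linarith

lemma noiseKernel_sum_one (ε : ℝ) (x : ι → Bool) :
    ∑ y : ι → Bool, noiseKernel ε x y = 1 := by
  unfold noiseKernel
  rw [sum_pi_prod (fun j b => if b = x j then 1 - ε else ε)]
  refine Finset.prod_eq_one fun j _ => ?_
  rw [Fintype.sum_bool]
  cases x j <;> simp

lemma sum_kernel_chi (ε : ℝ) (k : ι) (y : ι → Bool) :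
    ∑ x : ι → Bool, noiseKernel ε x y * chi k x = (1 - 2*ε) * chi k y := by
  have key : ∀ x : ι → Bool, noiseKernel ε x y * chi k x
      = ∏ j : ι, ((if y j = x j then 1 - ε else ε) *
          (if j = k then (if x j then (1:ℝ) else -1) else 1)) := by
    intro x
    rw [Finset.prod_mul_distrib, Finset.prod_ite_eq']
    simp [noiseKernel, chi]
  rw [Finset.sum_congr rfl fun x _ => key x]
  rw [sum_pi_prod (fun j b => (if y j = b then 1 - ε else ε) *
      (if j = k then (if b then (1:ℝ) else -1) else 1))]
  have hfac : ∀ j : ι, (∑ b : Bool, (if y j = b then 1 - ε else ε) *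
      (if j = k then (if b then (1:ℝ) else -1) else 1))
      = if j = k then (1 - 2*ε) * chi k y else 1 := by
    intro j
    rw [Fintype.sum_bool]
    by_cases hj : j = k
    · subst hj
      simp only [if_pos rfl, chi]
      cases hy : y j <;> simp [hy] <;> ring
    · simp only [if_neg hj]
      cases hy : y j <;> simp [hy] <;> ring
  rw [Finset.prod_congr rfl fun j _ => hfac j, Finset.prod_ite_eq']
  simp

lemma bessel (D : (ι → Bool) → ℝ) :
    ∑ k : ι, (∑ x : ι → Bool, D x * chi k x) ^ 2
      ≤ (2 ^ Fintype.card ι : ℝ) * ∑ x : ι → Bool, (D x) ^ 2 := by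
  set N : ℝ := (2 ^ Fintype.card ι : ℝ) with hN
  have hNpos : (0:ℝ) < N := by positivity
  set c : ι → ℝ := fun k => ∑ x : ι → Bool, D x * chi k x with hc
  have key : (0:ℝ) ≤ ∑ x : ι → Bool, (D x - ∑ k : ι, c k / N * chi k x)^2 :=
    Finset.sum_nonneg fun x _ => sq_nonneg _
  have e1 : ∑ x : ι → Bool, D x * (∑ k : ι, c k / N * chi k x)
      = ∑ k : ι, c k / N * c k := by
    simp_rw [Finset.mul_sum]
    rw [Finset.sum_comm]
    refine Finset.sum_congr rfl fun k _ => ?_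
    rw [Finset.mul_sum]
    exact Finset.sum_congr rfl fun x _ => by ring
  have e2 : ∑ x : ι → Bool, (∑ k : ι, c k / N * chi k x)^2
      = ∑ k : ι, (c k / N)^2 * N := by
    simp_rw [sq, Finset.sum_mul_sum]
    rw [Finset.sum_comm]
    refine Finset.sum_congr rfl fun k _ => ?_
    rw [Finset.sum_comm]
    have h3 : ∀ l, ∑ x : ι → Bool, (c k / N * chi k x) * (c l / N * chi l x)
        = c k / N * (c l / N) * (if k = l then N else 0) := by
      intro l
      rw [← chi_orth k l, Finset.mul_sum]
      exact Finset.sum_congr rfl fun x _ => by ring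
    rw [Finset.sum_congr rfl fun l _ => h3 l]
    simp_rw [mul_ite, mul_zero]
    rw [Finset.sum_ite_eq]
    simp
  have expand : ∑ x : ι → Bool, (D x - ∑ k : ι, c k / N * chi k x)^2
      = ∑ x : ι → Bool, (D x)^2 - 2 * (∑ k : ι, c k / N * c k)
          + ∑ k : ι, (c k / N)^2 * N := by
    have expand0 : ∀ x : ι → Bool, (D x - ∑ k : ι, c k / N * chi k x)^2
        = (D x)^2 - 2*(D x * ∑ k : ι, c k / N * chi k x)
            + (∑ k : ι, c k / N * chi k x)^2 := fun x => by ring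
    rw [Finset.sum_congr rfl fun x _ => expand0 x, Finset.sum_add_distrib,
      Finset.sum_sub_distrib, ← Finset.mul_sum, e1, e2]
  have e3 : ∑ k : ι, c k / N * c k = (∑ k : ι, (c k)^2)/N := by
    rw [Finset.sum_div]
    exact Finset.sum_congr rfl fun k _ => by field_simp [hNpos.ne']
  have e4 : ∑ k : ι, (c k / N)^2 * N = (∑ k : ι, (c k)^2)/N := by
    rw [Finset.sum_div]
    refine Finset.sum_congr rfl fun k _ => ?_
    field_simp [hNpos.ne']
  rw [expand, e3, e4] at key
  have h5 : (∑ k : ι, (c k)^2)/N ≤ ∑ x : ι → Bool, (D x)^2 := by linarith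
  calc ∑ k : ι, (c k)^2 = (∑ k : ι, (c k)^2)/N * N := by field_simp
    _ ≤ (∑ x : ι → Bool, (D x)^2) * N := mul_le_mul_of_nonneg_right h5 hNpos.le
    _ = N * ∑ x : ι → Bool, (D x)^2 := mul_comm _ _

lemma indE_mono {A : Finset (ι → Bool)} (hA : MonotoneEvent A) {x z : ι → Bool}
    (hxz : ∀ j, x j ≤ z j) : indE A x ≤ indE A z := by
  unfold indE
  by_cases hx : x ∈ A
  · simp [hx, hA x z hxz hx]
  · simp only [if_neg hx]
    split <;> norm_num

lemma influence_identity (A : Finset (ι → Bool)) (hA : MonotoneEvent A) (k : ι) :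
    (2 ^ Fintype.card ι : ℝ) * influence k (indE A) = 2 * ∑ y ∈ A, chi k y := by
  set f := indE A with hf
  have habs : ∀ x : ι → Bool, |f (flipBit k x) - f x|
      = (f x - f (flipBit k x)) * chi k x := by
    intro x
    by_cases hx : x k
    · have hle : ∀ j, flipBit k x j ≤ x j := by
        intro j
        by_cases hj : j = k
        · subst hj; rw [flipBit_self, hx]; simp
        · rw [flipBit_other hj]
      have := indE_mono hA hle
      rw [abs_of_nonpos (by linarith)]
      simp [chi, hx]
    · have hle : ∀ j, x j ≤ flipBit k x j := by
        intro j
        by_cases hj : j = k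
        · subst hj; rw [flipBit_self]; simp [hx]
        · rw [flipBit_other hj]
      have := indE_mono hA hle
      rw [abs_of_nonneg (by linarith)]
      simp [chi, hx]
  have hT : ∑ y : ι → Bool, f y * chi k y = ∑ y ∈ A, chi k y := by
    simp only [hf, indE, ite_mul, one_mul, zero_mul]
    rw [Finset.sum_ite_mem, Finset.univ_inter]
  have hT2 : ∑ x : ι → Bool, f (flipBit k x) * chi k x = - ∑ y ∈ A, chi k y := by
    have e : ∑ x : ι → Bool, f (flipBit k x) * chi k x
        = -∑ x : ι → Bool, f (flipBit k x) * chi k (flipBit k x) := by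
      rw [← Finset.sum_neg_distrib]
      exact Finset.sum_congr rfl fun x _ => by rw [chi_flip]; ring
    rw [e, sum_flip k (fun z => f z * chi k z), hT]
  have hsum : ∑ x : ι → Bool, |f (flipBit k x) - f x| = 2 * ∑ y ∈ A, chi k y := by
    rw [Finset.sum_congr rfl fun x _ => habs x]
    have : ∀ x : ι → Bool, (f x - f (flipBit k x)) * chi k x
        = f x * chi k x - f (flipBit k x) * chi k x := fun x => by ring
    rw [Finset.sum_congr rfl fun x _ => this x, Finset.sum_sub_distrib, hT, hT2]
    ring
  have hN : (0:ℝ) < 2 ^ Fintype.card ι := by positivity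
  unfold influence cexpect
  rw [hsum]
  field_simp

lemma gauge_lower {ε : ℝ} (hε0 : 0 ≤ ε) (hε1 : ε ≤ 1) (A : Finset (ι → Bool))
    (hA : MonotoneEvent A) :
    (1 - 2*ε)^2 * sqInfE A / 8 ≤ gauge ε A := by
  set N : ℝ := (2 ^ Fintype.card ι : ℝ) with hN
  have hNpos : (0:ℝ) < N := by positivity
  set D : (ι → Bool) → ℝ := fun x => condProb ε A x - cprob A with hD
  -- bounds on D
  have hcardN : (A.card : ℝ) ≤ N := by
    rw [hN]
    exact_mod_cast le_trans (Nat.le_of_eq rfl)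
      (by simpa [Finset.card_univ, Fintype.card_fun] using Finset.card_le_univ A)
  have hp0 : 0 ≤ cprob A := by unfold cprob; positivity
  have hp1 : cprob A ≤ 1 := by
    unfold cprob; rw [div_le_one (by positivity)]; exact hcardN
  have hc0 : ∀ x, 0 ≤ condProb ε A x := fun x =>
    Finset.sum_nonneg fun y _ => noiseKernel_nonneg hε0 hε1 x y
  have hc1 : ∀ x, condProb ε A x ≤ 1 := by
    intro x
    calc condProb ε A x ≤ ∑ y : ι → Bool, noiseKernel ε x y :=
          Finset.sum_le_sum_of_subset_of_nonneg (Finset.subset_univ A)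
            (fun y _ _ => noiseKernel_nonneg hε0 hε1 x y)
      _ = 1 := noiseKernel_sum_one ε x
  have hD1 : ∀ x, |D x| ≤ 1 := fun x =>
    abs_le.2 ⟨by have := hc0 x; simp only [hD]; linarith,
      by have := hc1 x; simp only [hD]; linarith⟩
  have hDsq : ∀ x, (D x)^2 ≤ 1 := fun x => by
    nlinarith [hD1 x, le_abs_self (D x), neg_abs_le (D x)]
  -- Fourier coefficient of D
  have hck : ∀ k : ι, ∑ x : ι → Bool, D x * chi k x
      = (1 - 2*ε) * ∑ y ∈ A, chi k y := by
    intro k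
    have e0 : ∀ x : ι → Bool, D x * chi k x
        = (∑ y ∈ A, noiseKernel ε x y * chi k x) - cprob A * chi k x := by
      intro x
      simp only [hD, condProb, ← Finset.sum_mul]
      ring
    calc ∑ x : ι → Bool, D x * chi k x
        = (∑ x : ι → Bool, ∑ y ∈ A, noiseKernel ε x y * chi k x)
            - cprob A * ∑ x : ι → Bool, chi k x := by
          rw [Finset.sum_congr rfl fun x _ => e0 x, Finset.sum_sub_distrib,
            Finset.mul_sum]
      _ = ∑ y ∈ A, ∑ x : ι → Bool, noiseKernel ε x y * chi k x := by
          rw [sum_chi, Finset.sum_comm]; ring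
      _ = ∑ y ∈ A, (1 - 2*ε) * chi k y :=
          Finset.sum_congr rfl fun y _ => sum_kernel_chi ε k y
      _ = (1 - 2*ε) * ∑ y ∈ A, chi k y := (Finset.mul_sum _ _ _).symm
  -- sum of squared coefficients
  have hsq : ∑ k : ι, (∑ x : ι → Bool, D x * chi k x)^2
      = (1-2*ε)^2 * N^2 / 4 * sqInfE A := by
    unfold sqInfE sqInf
    rw [Finset.mul_sum]
    refine Finset.sum_congr rfl fun k _ => ?_
    rw [hck k]
    have h2 := influence_identity A hA k
    have h3 : ∑ y ∈ A, chi k y = N * influence k (indE A) / 2 := by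
      rw [hN]; linarith [h2]
    rw [h3]; ring
  have hlow : (1-2*ε)^2 * sqInfE A / 4 * N ≤ ∑ x : ι → Bool, (D x)^2 := by
    have hb := bessel D
    rw [hsq] at hb
    refine le_of_mul_le_mul_right ?_ hNpos
    nlinarith [hb]
  have hone : ∑ x : ι → Bool, (D x)^2 ≤ N := by
    calc ∑ x : ι → Bool, (D x)^2 ≤ ∑ _x : ι → Bool, (1:ℝ) :=
          Finset.sum_le_sum fun x _ => hDsq x
      _ = N := by simp [hN, Finset.card_univ, Fintype.card_fun]
  -- lower bound on the gauge
  set w : ℝ := (1-2*ε)^2 * sqInfE A / 4 with hw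
  have hwnn : 0 ≤ w := by
    have : 0 ≤ sqInfE A := Finset.sum_nonneg fun k _ => sq_nonneg _
    positivity
  have hw1 : w ≤ 1 := by
    refine le_of_mul_le_mul_right ?_ hNpos
    calc w * N ≤ ∑ x : ι → Bool, (D x)^2 := hlow
      _ ≤ N := hone
      _ = 1 * N := (one_mul N).symm
  have goal_eq : (1 - 2*ε)^2 * sqInfE A / 8 = w / 2 := by rw [hw]; ring
  rw [goal_eq]
  unfold gauge
  refine le_csInf ?_ ?_
  · refine ⟨1, one_pos, ?_⟩
    have hemp : (@Finset.filter _ (fun x => (1:ℝ) < |condProb ε A x - cprob A|)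
        (Classical.decPred _) Finset.univ) = ∅ :=
      Finset.filter_eq_empty_iff.2 fun x _ => not_lt.2 (hD1 x)
    rw [hemp]
    simp [cprob]
  · rintro δ ⟨hδpos, hfil⟩
    set F := @Finset.filter _ (fun x => δ < |condProb ε A x - cprob A|)
      (Classical.decPred _) Finset.univ with hF
    have hcount : ((F.card : ℝ)) = ∑ x : ι → Bool, (if δ < |D x| then (1:ℝ) else 0) := by
      rw [hF, Finset.card_filter]
      push_cast
      refine Finset.sum_congr rfl fun x _ => ?_
      by_cases hx : δ < |D x| <;> simp [hx, hD]
    have hFb : (F.card : ℝ) < δ * N := by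
      have : cprob F < δ := hfil
      unfold cprob at this
      rw [← hN] at this
      exact (div_lt_iff₀ hNpos).1 this
    have hup : ∑ x : ι → Bool, (D x)^2 < δ * N + N * δ^2 := by
      calc ∑ x : ι → Bool, (D x)^2
          ≤ ∑ x : ι → Bool, ((if δ < |D x| then (1:ℝ) else 0) + δ^2) := by
            refine Finset.sum_le_sum fun x _ => ?_
            by_cases hx : δ < |D x|
            · simp only [if_pos hx]
              nlinarith [hDsq x, sq_nonneg δ]
            · simp only [if_neg hx]
              push_neg at hx
              nlinarith [abs_nonneg (D x), le_abs_self (D x), neg_abs_le (D x)]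
        _ = (F.card : ℝ) + N * δ^2 := by
            rw [Finset.sum_add_distrib, ← hcount, Finset.sum_const,
              Finset.card_univ, nsmul_eq_mul]
            congr 1
            rw [hN]
            push_cast [Fintype.card_fun, Fintype.card_bool]
            ring
        _ < δ * N + N * δ^2 := by linarith
    have hwd : w < δ + δ^2 := by
      have h1 : w * N < (δ + δ^2) * N := by nlinarith [hlow, hup]
      exact lt_of_mul_lt_mul_right h1 hNpos.le
    rcases le_or_gt 1 δ with h | h
    · linarith
    · nlinarith


/-- A sequence of monotone events with II(A_m) bounded away from 0 is not
asymptotically noise sensitive. -/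
theorem not_noise_sensitive_of_monotone_sqInf_bounded_below
    (n : ℕ → ℕ) (A : ∀ m, Finset (Cube (n m)))
    (hmono : ∀ m, MonotoneEvent (A m))
    (h : ∃ c : ℝ, 0 < c ∧ ∀ m, c ≤ sqInfE (A m)) :
    ∃ ε : ℝ, 0 < ε ∧ ε < 1/2 ∧
      ¬ Tendsto (fun m => gauge ε (A m)) atTop (nhds 0) := by
  obtain ⟨c, hc, hbd⟩ := h
  refine ⟨1/4, by norm_num, by norm_num, ?_⟩
  intro hT
  have hg : ∀ m, c / 32 ≤ gauge (1/4) (A m) := by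
    intro m
    have h1 := gauge_lower (ε := 1/4) (by norm_num) (by norm_num) (A m) (hmono m)
    have h2 := hbd m
    nlinarith [h1, h2]
  have hev := hT.eventually_lt_const (show (0:ℝ) < c/32 by positivity)
  obtain ⟨m, hm⟩ := hev.exists
  linarith [hg m]

end BKS
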